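/- arXiv:2405.05778 — 4 statements merged into one kernel-verified Lean document; each statement's English description precedes it below -/
import Mathlib

section
/- Let ν, λ > 0 and let V̂ : ℝ² → [0,∞) be bounded by M and supported in the closed unit ball. Then for every ε ∈ (0,1) and every a ∈ ℝ², ∫_{ℝ²} V̂(q) / (ε²λ + (ν²/2)|a + q|²) dq ≤ C·(1 + log(1 + ν²/(2ε²λ))) for a constant C depending only on M and ν. -/
/-!
On its support, the unit disc, `V̂` is at most `M`. Where moreover `|a + q| ≤ 1`, the kernel
`(A + B|a + q|²)⁻¹` is the translate of the kernel restricted to the unit disc, whose integral is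
`(π / B) log((A + B) / A)` in polar coordinates; elsewhere the denominator is at least `B`, so that
part contributes at most `π M / B`. Here `A = ε²λ` and `B = ν² / 2`.
-/

open MeasureTheory Metric Set

lemma integral_id_div_add_mul_sq {A B : ℝ} (hA : 0 < A) (hB : 0 < B) (R : ℝ) :
    ∫ r in (0:ℝ)..R, r / (A + B * r ^ 2) = Real.log ((A + B * R ^ 2) / A) / (2 * B) := by
  have hpos : ∀ r : ℝ, 0 < A + B * r ^ 2 := fun r => by positivity
  have hderiv : ∀ r ∈ uIcc (0:ℝ) R,
      HasDerivAt (fun r => Real.log (A + B * r ^ 2) / (2 * B)) (r / (A + B * r ^ 2)) r := by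
    intro r _
    have hden : HasDerivAt (fun r : ℝ => A + B * r ^ 2) (B * (2 * r ^ 1)) r := by
      simpa using ((hasDerivAt_pow 2 r).const_mul B).const_add A
    exact (((Real.hasDerivAt_log (hpos r).ne').comp r hden).div_const (2 * B)).congr_deriv
      (by field_simp)
  have hcont : Continuous fun r : ℝ => r / (A + B * r ^ 2) :=
    continuous_id.div (by fun_prop) fun r => (hpos r).ne'
  rw [intervalIntegral.integral_eq_sub_of_hasDerivAt hderiv (hcont.intervalIntegrable 0 R),
    Real.log_div (hpos R).ne' hA.ne']
  simp only [ne_eq, OfNat.ofNat_ne_zero, not_false_eq_true, zero_pow, mul_zero, add_zero]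
  ring

lemma integral_indicator_closedBall_inv_add_mul_sq {A B R : ℝ} (hA : 0 < A) (hB : 0 < B)
    (hR : 0 ≤ R) :
    ∫ x : EuclideanSpace ℝ (Fin 2), (closedBall 0 R).indicator (fun x => (A + B * ‖x‖ ^ 2)⁻¹) x
      = Real.pi / B * Real.log ((A + B * R ^ 2) / A) := by
  set F : ℝ → ℝ := (Iic R).indicator fun r => (A + B * r ^ 2)⁻¹
  have hradial : ∀ x : EuclideanSpace ℝ (Fin 2),
      (closedBall 0 R).indicator (fun x => (A + B * ‖x‖ ^ 2)⁻¹) x = F ‖x‖ := by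
    intro x
    by_cases hx : ‖x‖ ≤ R <;> simp [F, indicator, hx]
  have hF : ∀ r : ℝ, r ^ (2 - 1) • F r = (Iic R).indicator (fun r => r / (A + B * r ^ 2)) r := by
    intro r
    by_cases hr : r ≤ R <;> simp [F, indicator, hr, div_eq_mul_inv]
  simp_rw [hradial, integral_fun_norm_addHaar volume F, finrank_euclideanSpace_fin, hF,
    setIntegral_indicator measurableSet_Iic, Ioi_inter_Iic,
    ← intervalIntegral.integral_of_le hR, integral_id_div_add_mul_sq hA hB]
  simp [measureReal_def, Real.pi_nonneg]
  field_simp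

lemma inv_add_mul_norm_sq_le_indicator_add {E : Type*} [SeminormedAddCommGroup E] {A B : ℝ}
    (hA : 0 ≤ A) (hB : 0 < B) (x : E) :
    (A + B * ‖x‖ ^ 2)⁻¹ ≤ (closedBall 0 1).indicator (fun x => (A + B * ‖x‖ ^ 2)⁻¹) x + B⁻¹ := by
  by_cases hx : ‖x‖ ≤ 1
  · simp [indicator, hx, hB.le]
  · have hB_le : B ≤ A + B * ‖x‖ ^ 2 := by nlinarith [one_lt_pow₀ (not_le.mp hx) two_ne_zero]
    simpa [indicator, hx] using inv_anti₀ hB hB_le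

lemma integral_div_add_mul_norm_add_sq_le {V : EuclideanSpace ℝ (Fin 2) → ℝ} {M A B : ℝ}
    (hV : Measurable V) (hV0 : ∀ q, 0 ≤ V q) (hVM : ∀ q, V q ≤ M)
    (hV_supp : ∀ q, 1 < ‖q‖ → V q = 0) (hA : 0 < A) (hB : 0 < B) (a : EuclideanSpace ℝ (Fin 2)) :
    ∫ q, V q / (A + B * ‖a + q‖ ^ 2) ≤ Real.pi * M / B * (1 + Real.log ((A + B) / A)) := by
  have hM : 0 ≤ M := (hV0 0).trans (hVM 0)
  set f := (closedBall (0 : EuclideanSpace ℝ (Fin 2)) 1).indicator fun x => (A + B * ‖x‖ ^ 2)⁻¹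
  set disc := (closedBall (0 : EuclideanSpace ℝ (Fin 2)) 1).indicator (1 : EuclideanSpace ℝ (Fin 2) → ℝ)
  set h := fun q => M * (f (a + q) + B⁻¹ * disc q)
  have hf_int : Integrable f :=
    (integrable_indicator_iff measurableSet_closedBall).2 <|
      (Continuous.continuousOn (by fun_prop (disch := intro x; positivity))).integrableOn_compact
        (isCompact_closedBall 0 1)
  have hdisc_int : Integrable disc :=
    (integrable_indicator_iff measurableSet_closedBall).2 <|
      integrableOn_const measure_closedBall_lt_top.ne
  have hh_int : Integrable h := ((hf_int.comp_add_left a).add (hdisc_int.const_mul _)).const_mul _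
  have hle : ∀ q, V q / (A + B * ‖a + q‖ ^ 2) ≤ h q := by
    intro q
    by_cases hq : ‖q‖ ≤ 1
    · have hdisc : disc q = 1 := by simp [disc, hq]
      simp only [h, hdisc, mul_one, div_eq_mul_inv]
      exact mul_le_mul (hVM q) (inv_add_mul_norm_sq_le_indicator_add hA.le hB (a + q))
        (by positivity) hM
    · have hf_nonneg : 0 ≤ f (a + q) := indicator_nonneg (fun x _ => by positivity) _
      simp [h, disc, hV_supp q (not_le.mp hq), hq]
      positivity
  have hg_int : Integrable fun q => V q / (A + B * ‖a + q‖ ^ 2) :=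
    hh_int.mono' (hV.div (by fun_prop)).aestronglyMeasurable <| .of_forall fun q => by
      rw [Real.norm_of_nonneg (div_nonneg (hV0 q) (by positivity))]
      exact hle q
  calc ∫ q, V q / (A + B * ‖a + q‖ ^ 2) ≤ ∫ q, h q := integral_mono hg_int hh_int hle
    _ = M * (Real.pi / B * Real.log ((A + B) / A) + B⁻¹ * Real.pi) := by
      rw [integral_const_mul, integral_add (hf_int.comp_add_left a) (hdisc_int.const_mul _),
        integral_const_mul, integral_add_left_eq_self f a,
        integral_indicator_closedBall_inv_add_mul_sq hA hB zero_le_one,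
        integral_indicator_one measurableSet_closedBall]
      simp [measureReal_def, Real.pi_nonneg]
    _ = Real.pi * M / B * (1 + Real.log ((A + B) / A)) := by ring

theorem stmt5 (ν M : ℝ) (hν : 0 < ν) (hM : 0 ≤ M) :
    ∃ C : ℝ, 0 < C ∧ ∀ V : EuclideanSpace ℝ (Fin 2) → ℝ, Measurable V →
      (∀ q, 0 ≤ V q) → (∀ q, V q ≤ M) → (∀ q, 1 < ‖q‖ → V q = 0) →
      ∀ lam ε : ℝ, 0 < lam → ε ∈ Set.Ioo (0 : ℝ) 1 →
      ∀ a : EuclideanSpace ℝ (Fin 2),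
        (∫ q : EuclideanSpace ℝ (Fin 2), V q / (ε ^ 2 * lam + ν ^ 2 / 2 * ‖a + q‖ ^ 2))
          ≤ C * (1 + Real.log (1 + ν ^ 2 / (2 * ε ^ 2 * lam))) := by
  have hB : 0 < ν ^ 2 / 2 := by positivity
  refine ⟨Real.pi * (M + 1) / (ν ^ 2 / 2), by positivity, ?_⟩
  rintro V hV hV0 hVM hV_supp lam ε hlam ⟨hε, -⟩ a
  have hA : 0 < ε ^ 2 * lam := by positivity
  have hratio : (ε ^ 2 * lam + ν ^ 2 / 2) / (ε ^ 2 * lam) = 1 + ν ^ 2 / (2 * ε ^ 2 * lam) := by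
    field_simp
  have hlog : 0 ≤ 1 + Real.log (1 + ν ^ 2 / (2 * ε ^ 2 * lam)) := by
    have := Real.log_nonneg (le_add_of_nonneg_right (by positivity : 0 ≤ ν ^ 2 / (2 * ε ^ 2 * lam)))
    linarith
  calc _ ≤ Real.pi * M / (ν ^ 2 / 2) * (1 + Real.log (1 + ν ^ 2 / (2 * ε ^ 2 * lam))) := by
        simpa only [hratio] using integral_div_add_mul_norm_add_sq_le hV hV0 hVM hV_supp hA hB a
    _ ≤ _ := by gcongr; linarith
end

section
/- Let ν, λ > 0 and let V̂ : ℝ² → [0,∞) be bounded by M and supported in the unit ball. Then for every a ∈ ℝ², ∫_{ℝ²} V̂(q) / (λ + (ν²/2)|a + q|²)² dq ≤ C/λ, where C depends only on M and ν (not on a or λ). -/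
/-! Bounding `V` by `M` and translating by `a` reduces the integral to
`M ∫ (λ + c‖x‖²)⁻² dx` over the plane, which polar coordinates turn into
`2 |B(0,1)| ∫₀^∞ r (λ + c r²)⁻² dr = |B(0,1)| / (c λ)`, with `c = ν²/2`. -/

open MeasureTheory Set Filter Topology

section RadialProfile

variable {c lam : ℝ}

lemma hasDerivAt_neg_inv_two_mul_inv_add_mul_sq (hc : 0 < c) (hlam : 0 < lam) (x : ℝ) :
    HasDerivAt (fun r ↦ -(2 * c)⁻¹ * (lam + c * r ^ 2)⁻¹) (x * ((lam + c * x ^ 2) ^ 2)⁻¹) x := by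
  have hquad : HasDerivAt (fun r : ℝ ↦ lam + c * r ^ 2) (c * (2 * x)) x := by
    simpa using ((hasDerivAt_pow 2 x).const_mul c).const_add lam
  refine ((hquad.inv (by positivity)).const_mul _).congr_deriv ?_
  field_simp

lemma tendsto_neg_inv_two_mul_inv_add_mul_sq_atTop (hc : 0 < c) :
    Tendsto (fun r ↦ -(2 * c)⁻¹ * (lam + c * r ^ 2)⁻¹) atTop (𝓝 0) := by
  have hquad : Tendsto (fun r : ℝ ↦ lam + c * r ^ 2) atTop atTop :=
    tendsto_atTop_add_const_left _ _ ((tendsto_pow_atTop two_ne_zero).const_mul_atTop hc)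
  simpa using hquad.inv_tendsto_atTop.const_mul (-(2 * c)⁻¹)

lemma integrableOn_Ioi_mul_inv_sq_add_mul_sq (hc : 0 < c) (hlam : 0 < lam) :
    IntegrableOn (fun r ↦ r * ((lam + c * r ^ 2) ^ 2)⁻¹) (Ioi 0) :=
  integrableOn_Ioi_deriv_of_nonneg'
    (fun x _ ↦ hasDerivAt_neg_inv_two_mul_inv_add_mul_sq hc hlam x)
    (fun x (hx : 0 < x) ↦ by positivity) (tendsto_neg_inv_two_mul_inv_add_mul_sq_atTop hc)

lemma integral_Ioi_mul_inv_sq_add_mul_sq (hc : 0 < c) (hlam : 0 < lam) :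
    ∫ r in Ioi 0, r * ((lam + c * r ^ 2) ^ 2)⁻¹ = (2 * c * lam)⁻¹ := by
  rw [integral_Ioi_of_hasDerivAt_of_nonneg'
    (fun x _ ↦ hasDerivAt_neg_inv_two_mul_inv_add_mul_sq hc hlam x)
    (fun x (hx : 0 < x) ↦ by positivity) (tendsto_neg_inv_two_mul_inv_add_mul_sq_atTop hc)]
  field_simp
  ring

end RadialProfile

section Plane

variable {E : Type*} [NormedAddCommGroup E] [NormedSpace ℝ E] [FiniteDimensional ℝ E]
  [MeasurableSpace E] [BorelSpace E] (μ : Measure E) [μ.IsAddHaarMeasure] {c lam : ℝ}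

lemma integrable_inv_sq_add_mul_norm_sq (hE : Module.finrank ℝ E = 2) (hc : 0 < c)
    (hlam : 0 < lam) : Integrable (fun x : E ↦ ((lam + c * ‖x‖ ^ 2) ^ 2)⁻¹) μ := by
  have : Nontrivial E := Module.nontrivial_of_finrank_eq_succ hE
  rw [integrable_fun_norm_addHaar μ (f := fun r ↦ ((lam + c * r ^ 2) ^ 2)⁻¹), hE]
  simpa using integrableOn_Ioi_mul_inv_sq_add_mul_sq hc hlam

lemma integral_inv_sq_add_mul_norm_sq (hE : Module.finrank ℝ E = 2) (hc : 0 < c)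
    (hlam : 0 < lam) :
    ∫ x, ((lam + c * ‖x‖ ^ 2) ^ 2)⁻¹ ∂μ = μ.real (Metric.ball 0 1) / (c * lam) := by
  have : Nontrivial E := Module.nontrivial_of_finrank_eq_succ hE
  rw [integral_fun_norm_addHaar μ (fun r ↦ ((lam + c * r ^ 2) ^ 2)⁻¹), hE]
  simp only [smul_eq_mul, nsmul_eq_mul, Nat.add_one_sub_one, pow_one,
    integral_Ioi_mul_inv_sq_add_mul_sq hc hlam]
  field_simp
  ring

lemma integral_div_sq_add_mul_norm_add_sq_le (hE : Module.finrank ℝ E = 2) (hc : 0 < c)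
    (hlam : 0 < lam) {V : E → ℝ} {M : ℝ} (hV0 : ∀ q, 0 ≤ V q) (hVM : ∀ q, V q ≤ M) (a : E) :
    ∫ q, V q / (lam + c * ‖a + q‖ ^ 2) ^ 2 ∂μ ≤ M * μ.real (Metric.ball 0 1) / (c * lam) := by
  have hdom : Integrable (fun q ↦ M * ((lam + c * ‖a + q‖ ^ 2) ^ 2)⁻¹) μ :=
    ((integrable_inv_sq_add_mul_norm_sq μ hE hc hlam).comp_add_left a).const_mul M
  calc ∫ q, V q / (lam + c * ‖a + q‖ ^ 2) ^ 2 ∂μ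
      ≤ ∫ q, M * ((lam + c * ‖a + q‖ ^ 2) ^ 2)⁻¹ ∂μ :=
        integral_mono_of_nonneg (.of_forall fun q ↦ by have := hV0 q; positivity) hdom
          (.of_forall fun q ↦ (div_eq_mul_inv _ _).trans_le
            (mul_le_mul_of_nonneg_right (hVM q) (by positivity)))
    _ = M * (μ.real (Metric.ball 0 1) / (c * lam)) := by
        rw [integral_const_mul, integral_add_left_eq_self (fun q ↦ ((lam + c * ‖q‖ ^ 2) ^ 2)⁻¹),
          integral_inv_sq_add_mul_norm_sq μ hE hc hlam]
    _ = M * μ.real (Metric.ball 0 1) / (c * lam) := by ring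

end Plane

theorem stmt6 (ν M : ℝ) (hν : 0 < ν) (hM : 0 ≤ M) :
    ∃ C : ℝ, 0 < C ∧ ∀ V : EuclideanSpace ℝ (Fin 2) → ℝ, Measurable V →
      (∀ q, 0 ≤ V q) → (∀ q, V q ≤ M) → (∀ q, 1 < ‖q‖ → V q = 0) →
      ∀ lam : ℝ, 0 < lam →
      ∀ a : EuclideanSpace ℝ (Fin 2),
        (∫ q : EuclideanSpace ℝ (Fin 2), V q / (lam + ν ^ 2 / 2 * ‖a + q‖ ^ 2) ^ 2)
          ≤ C / lam := by
  set c := ν ^ 2 / 2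
  have hc : 0 < c := by positivity
  set B := volume.real (Metric.ball (0 : EuclideanSpace ℝ (Fin 2)) 1)
  refine ⟨M * B / c + 1, by positivity, fun V _ hV0 hVM _ lam hlam a ↦ ?_⟩
  calc _ ≤ M * B / (c * lam) :=
        integral_div_sq_add_mul_norm_add_sq_le volume finrank_euclideanSpace_fin hc hlam hV0 hVM a
    _ = M * B / c / lam := by rw [div_mul_eq_div_div]
    _ ≤ (M * B / c + 1) / lam := by gcongr; linarith
end

section
/- Let p₁, p₂ ∈ ℝ² with p₂ ≠ 0, and let θ be the angle between a vector q and p₂. For q in Ω₁ = {x ∈ ℝ² : |p₁ + x| < |p₂|/2}, one has sin²θ ≤ 4|q + p₂|² / max(|p₂|², |p₁|²/4). -/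
/-!
Since `q × p₂ = q × (q + p₂) = (q + p₂) × p₂`, the bound `|u × v| ≤ |u||v|` gives
`sin²θ ≤ |q + p₂|² / max(|q|², |p₂|²)`. On `Ω₁` the triangle inequality gives
`|p₁| < |q| + |p₂|/2`, so `max(|p₂|², |p₁|²/4) ≤ 4 max(|q|², |p₂|²)`.
-/

/-- The two-dimensional cross product `u × v = u₁ v₂ − u₂ v₁`. -/
def cross2 (u v : EuclideanSpace ℝ (Fin 2)) : ℝ := u 0 * v 1 - u 1 * v 0

lemma cross2_add_left_self (u v : EuclideanSpace ℝ (Fin 2)) :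
    cross2 (u + v) v = cross2 u v := by
  simp only [cross2, PiLp.add_apply]; ring

lemma cross2_add_right_self (u v : EuclideanSpace ℝ (Fin 2)) :
    cross2 u (u + v) = cross2 u v := by
  simp only [cross2, PiLp.add_apply]; ring

lemma cross2_sq_add_inner_sq (u v : EuclideanSpace ℝ (Fin 2)) :
    cross2 u v ^ 2 + inner ℝ u v ^ 2 = ‖u‖ ^ 2 * ‖v‖ ^ 2 := by
  simp only [cross2, EuclideanSpace.real_norm_sq_eq, PiLp.inner_apply, Fin.sum_univ_two,
    RCLike.inner_apply, conj_trivial]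
  ring

lemma cross2_sq_le (u v : EuclideanSpace ℝ (Fin 2)) :
    cross2 u v ^ 2 ≤ ‖u‖ ^ 2 * ‖v‖ ^ 2 := by
  linarith [cross2_sq_add_inner_sq u v, sq_nonneg (inner ℝ u v)]

lemma cross2_sq_mul_max_le (u v : EuclideanSpace ℝ (Fin 2)) :
    cross2 u v ^ 2 * max (‖u‖ ^ 2) (‖v‖ ^ 2) ≤ ‖u + v‖ ^ 2 * (‖u‖ ^ 2 * ‖v‖ ^ 2) := by
  have hu : cross2 u v ^ 2 * ‖u‖ ^ 2 ≤ ‖u + v‖ ^ 2 * (‖u‖ ^ 2 * ‖v‖ ^ 2) := by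
    rw [← cross2_add_left_self]
    nlinarith [cross2_sq_le (u + v) v, sq_nonneg ‖u‖]
  have hv : cross2 u v ^ 2 * ‖v‖ ^ 2 ≤ ‖u + v‖ ^ 2 * (‖u‖ ^ 2 * ‖v‖ ^ 2) := by
    rw [← cross2_add_right_self]
    nlinarith [cross2_sq_le u (u + v), sq_nonneg ‖v‖]
  rcases max_choice (‖u‖ ^ 2) (‖v‖ ^ 2) with h | h <;> rw [h] <;> assumption

lemma cross2_sq_div_le (u v : EuclideanSpace ℝ (Fin 2)) :
    cross2 u v ^ 2 / (‖u‖ ^ 2 * ‖v‖ ^ 2) ≤ ‖u + v‖ ^ 2 / max (‖u‖ ^ 2) (‖v‖ ^ 2) := by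
  rcases eq_or_ne u 0 with rfl | hu
  · simp [cross2]; positivity
  rcases eq_or_ne v 0 with rfl | hv
  · simp [cross2]; positivity
  rw [div_le_div_iff₀ (by positivity) (lt_max_of_lt_left (by positivity))]
  exact cross2_sq_mul_max_le u v

lemma max_sq_le_four_mul_max_sq {E : Type*} [SeminormedAddCommGroup E] {p₁ p₂ q : E}
    (hq : ‖p₁ + q‖ < ‖p₂‖ / 2) :
    max (‖p₂‖ ^ 2) (‖p₁‖ ^ 2 / 4) ≤ 4 * max (‖q‖ ^ 2) (‖p₂‖ ^ 2) := by
  have hp₁ : ‖p₁‖ ≤ ‖p₁ + q‖ + ‖q‖ := by simpa using norm_sub_le (p₁ + q) q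
  have hmax : ‖p₁‖ / 2 ≤ max ‖q‖ ‖p₂‖ := by
    linarith [le_max_left ‖q‖ ‖p₂‖, le_max_right ‖q‖ ‖p₂‖, norm_nonneg q]
  have hsq : max ‖q‖ ‖p₂‖ ^ 2 ≤ max (‖q‖ ^ 2) (‖p₂‖ ^ 2) := by
    rcases max_choice ‖q‖ ‖p₂‖ with h | h <;> rw [h] <;> simp
  refine max_le (by nlinarith [le_max_right (‖q‖ ^ 2) (‖p₂‖ ^ 2)]) ?_
  nlinarith [norm_nonneg p₁]

theorem stmt7_general (p₁ p₂ : EuclideanSpace ℝ (Fin 2))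
    (q : EuclideanSpace ℝ (Fin 2)) (hq : ‖p₁ + q‖ < ‖p₂‖ / 2) :
    (cross2 q p₂) ^ 2 / (‖q‖ ^ 2 * ‖p₂‖ ^ 2)
      ≤ 4 * ‖q + p₂‖ ^ 2 / max (‖p₂‖ ^ 2) (‖p₁‖ ^ 2 / 4) := by
  have hp₂ : 0 < ‖p₂‖ := by linarith [norm_nonneg (p₁ + q)]
  calc (cross2 q p₂) ^ 2 / (‖q‖ ^ 2 * ‖p₂‖ ^ 2)
      ≤ ‖q + p₂‖ ^ 2 / max (‖q‖ ^ 2) (‖p₂‖ ^ 2) := cross2_sq_div_le q p₂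
    _ = 4 * ‖q + p₂‖ ^ 2 / (4 * max (‖q‖ ^ 2) (‖p₂‖ ^ 2)) := by
      rw [mul_div_mul_left _ _ four_ne_zero]
    _ ≤ 4 * ‖q + p₂‖ ^ 2 / max (‖p₂‖ ^ 2) (‖p₁‖ ^ 2 / 4) :=
      div_le_div_of_nonneg_left (by positivity) (lt_max_of_lt_left (by positivity))
        (max_sq_le_four_mul_max_sq hq)

theorem stmt7 (p₁ p₂ : EuclideanSpace ℝ (Fin 2)) (hp₂ : p₂ ≠ 0)
    (q : EuclideanSpace ℝ (Fin 2)) (hq : ‖p₁ + q‖ < ‖p₂‖ / 2) :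
    (cross2 q p₂) ^ 2 / (‖q‖ ^ 2 * ‖p₂‖ ^ 2)
      ≤ 4 * ‖q + p₂‖ ^ 2 / max (‖p₂‖ ^ 2) (‖p₁‖ ^ 2 / 4) :=
  stmt7_general p₁ p₂ q hq
end

section
/- Let ν > 0 and G_i^{+,m}, G_j be as in the iterated simplex definition (G_0^{+,m} = 1, G_i^{+,m}(x) = ∫_{Δ_x^{i−1}} ∏_{l=0}^{i−1}(1 + (4/ν⁴)G_{m+l}((ν⁴/4)x_l))^{−2} dx). Then for i ≥ 1, (G_i^{+,m})'(x) = (4/ν⁴) G_{i−1}^{+,m}(x) / (1 + (4/ν⁴) G_{m+i−1}(x))². -/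
open MeasureTheory intervalIntegral Set

/-!
Integrating out the largest coordinate (Fubini) writes an ordered-simplex integral of order
`i` as `∫₀^R` of the order-`i - 1` integral times the last factor, so its derivative in `R` follows
from the fundamental theorem of calculus; the substitution `R = (4/ν⁴) x` then produces the
factor `4/ν⁴`. The `G_j` are continuous and nonnegative on `[0, ∞)` by their own recursion,
which keeps every integrand continuous there.
-/

lemma hasDerivWithinAt_Ici_of_eqOn_integral {f F : ℝ → ℝ} {a x : ℝ}
    (hf : ContinuousOn f (Ici a)) (hF : EqOn F (fun y => ∫ t in a..y, f t) (Ici a))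
    (hx : a ≤ x) : HasDerivWithinAt F (f x) (Ici a) x := by
  have hext : Continuous fun t => f (max t a) :=
    hf.comp_continuous (continuous_id.max continuous_const) fun t => le_max_right t a
  have hEq : EqOn F (fun y => ∫ t in a..y, f (max t a)) (Ici a) := fun y hy =>
    (hF hy).trans <| integral_congr fun t ht => by
      rw [uIcc_of_le hy] at ht
      simp only [max_eq_left ht.1]
  have hprim := (hext.integral_hasStrictDerivAt a x).hasDerivAt.hasDerivWithinAt (s := Ici a)
  rw [max_eq_left hx] at hprim
  exact hprim.congr hEq (hEq hx)

lemma continuousOn_and_nonneg_of_eq_integral_inv {c : ℝ} (hc : 0 ≤ c) {G : ℕ → ℝ → ℝ}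
    (hG1 : ∀ x, G 1 x = 0)
    (hGrec : ∀ j, 1 ≤ j → ∀ x, G (j + 1) x = ∫ y in (0 : ℝ)..x, 1 / (1 + c * G j y)) :
    ∀ j, 1 ≤ j → ContinuousOn (G j) (Ici 0) ∧ ∀ x ∈ Ici (0 : ℝ), 0 ≤ G j x := by
  intro j hj
  induction j, hj using Nat.le_induction with
  | base =>
    rw [show G 1 = 0 from funext hG1]
    exact ⟨continuousOn_const, fun _ _ => le_rfl⟩
  | succ j hj ih =>
    obtain ⟨hcont, hnonneg⟩ := ih
    have hden : ∀ y ∈ Ici (0 : ℝ), 0 < 1 + c * G j y := fun y hy => by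
      linarith [mul_nonneg hc (hnonneg y hy)]
    have hint : ContinuousOn (fun y => 1 / (1 + c * G j y)) (Ici 0) :=
      continuousOn_const.div (continuousOn_const.add (continuousOn_const.mul hcont))
        fun y hy => (hden y hy).ne'
    refine ⟨fun x hx => (hasDerivWithinAt_Ici_of_eqOn_integral hint
      (fun y _ => hGrec j hj y) hx).continuousWithinAt, fun x hx => ?_⟩
    rw [hGrec j hj x]
    exact integral_nonneg hx fun y hy => (one_div_pos.mpr (hden y hy.1)).le

lemma continuousOn_one_div_one_add_mul_comp_sq {c k : ℝ} (hc : 0 ≤ c) (hk : 0 ≤ k) {H : ℝ → ℝ}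
    (hH : ContinuousOn H (Ici 0)) (hH_nonneg : ∀ x ∈ Ici (0 : ℝ), 0 ≤ H x) :
    ContinuousOn (fun t => 1 / (1 + c * H (k * t)) ^ 2) (Ici 0) := by
  have hscale : MapsTo (k * ·) (Ici (0 : ℝ)) (Ici 0) := fun t (ht : 0 ≤ t) => mul_nonneg hk ht
  refine continuousOn_const.div ((continuousOn_const.add (continuousOn_const.mul
    (hH.comp (continuousOn_const.mul continuousOn_id) hscale))).pow 2) fun t ht => ?_
  exact pow_ne_zero 2 (by linarith [mul_nonneg hc (hH_nonneg _ (hscale ht))])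

def orderedSimplex (n : ℕ) (R : ℝ) : Set (Fin n → ℝ) :=
  {y | (∀ l, 0 ≤ y l ∧ y l ≤ R) ∧ ∀ l l' : Fin n, l ≤ l' → y l ≤ y l'}

lemma orderedSimplex_eq_Icc_inter (n : ℕ) (R : ℝ) :
    orderedSimplex n R = Icc 0 (fun _ => R) ∩ {y | Monotone y} := by
  ext y
  simp [orderedSimplex, Pi.le_def, forall_and, Monotone]

lemma isCompact_orderedSimplex (n : ℕ) (R : ℝ) : IsCompact (orderedSimplex n R) := by
  rw [orderedSimplex_eq_Icc_inter]
  exact isCompact_Icc.inter_right isClosed_monotone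

lemma measurableSet_orderedSimplex (n : ℕ) (R : ℝ) : MeasurableSet (orderedSimplex n R) :=
  (isCompact_orderedSimplex n R).isClosed.measurableSet

lemma snoc_mem_orderedSimplex_iff {n : ℕ} {R s : ℝ} {z : Fin n → ℝ} :
    (Fin.snoc z s : Fin (n + 1) → ℝ) ∈ orderedSimplex (n + 1) R ↔
      s ∈ Icc 0 R ∧ z ∈ orderedSimplex n s := by
  simp only [orderedSimplex, Fin.forall_fin_succ', Fin.castSucc_le_castSucc_iff, Fin.last_le_iff,
    Fin.castSucc_ne_last, IsEmpty.forall_iff, implies_true, le_refl, and_self,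
    and_true, mem_ofPred_eq, Fin.snoc_castSucc, Fin.snoc_last, mem_Icc]
  exact ⟨fun ⟨⟨hz, hs⟩, h⟩ => ⟨hs, fun l => ⟨(hz l).1, (h l).2 (Fin.le_last _)⟩, fun l => (h l).1⟩,
    fun ⟨hs, hz, hmono⟩ => ⟨⟨fun l => ⟨(hz l).1, (hz l).2.trans hs.2⟩, hs⟩,
      fun l => ⟨hmono l, fun _ => (hz l).2⟩⟩⟩

lemma setIntegral_orderedSimplex_succ {n : ℕ} {R : ℝ} {f : (Fin (n + 1) → ℝ) → ℝ}
    (hf : IntegrableOn f (orderedSimplex (n + 1) R)) :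
    ∫ y in orderedSimplex (n + 1) R, f y =
      ∫ s in Icc 0 R, ∫ z in orderedSimplex n s, f (Fin.snoc z s) := by
  let e := MeasurableEquiv.piFinSuccAbove (fun _ : Fin (n + 1) => ℝ) (Fin.last n)
  have he : MeasurePreserving e.symm volume volume :=
    (volume_preserving_piFinSuccAbove _ _).symm
  have he_apply : ∀ p : ℝ × (Fin n → ℝ), e.symm p = Fin.snoc p.2 p.1 := fun p => by
    simp [e, MeasurableEquiv.piFinSuccAbove_symm_apply, Fin.insertNthEquiv, Fin.insertNth_last']
  set F := (orderedSimplex (n + 1) R).indicator f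
  have hF : Integrable (fun p : ℝ × (Fin n → ℝ) => F (Fin.snoc p.2 p.1)) (volume.prod volume) := by
    have := (he.integrable_comp_emb e.symm.measurableEmbedding).mpr
      (hf.integrable_indicator (measurableSet_orderedSimplex _ _))
    simpa only [Function.comp_def, he_apply, Measure.volume_eq_prod] using this
  calc ∫ y in orderedSimplex (n + 1) R, f y
      = ∫ y, F y := (MeasureTheory.integral_indicator (measurableSet_orderedSimplex _ _)).symm
    _ = ∫ p : ℝ × (Fin n → ℝ), F (Fin.snoc p.2 p.1) := by
      simp only [← he_apply, he.integral_comp' F]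
    _ = ∫ s, ∫ z, F (Fin.snoc z s) := by
      rw [Measure.volume_eq_prod]
      exact integral_prod _ hF
    _ = ∫ s in Icc 0 R, ∫ z in orderedSimplex n s, f (Fin.snoc z s) := by
      rw [← MeasureTheory.integral_indicator measurableSet_Icc]
      congr 1
      funext s
      by_cases hs : s ∈ Icc 0 R
      · rw [indicator_of_mem hs,
          ← MeasureTheory.integral_indicator (measurableSet_orderedSimplex n s)]
        congr 1
        funext z
        by_cases hz : z ∈ orderedSimplex n s
        · rw [indicator_of_mem hz]
          exact indicator_of_mem (snoc_mem_orderedSimplex_iff.2 ⟨hs, hz⟩) f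
        · rw [indicator_of_notMem hz]
          exact indicator_of_notMem (fun h => hz (snoc_mem_orderedSimplex_iff.1 h).2) f
      · rw [indicator_of_notMem hs]
        exact integral_eq_zero_of_ae <| .of_forall fun z =>
          indicator_of_notMem (fun h => hs (snoc_mem_orderedSimplex_iff.1 h).1) f

noncomputable def orderedSimplexIntegral (g : ℕ → ℝ → ℝ) (n : ℕ) (R : ℝ) : ℝ :=
  ∫ y in orderedSimplex n R, ∏ l : Fin n, g l (y l)

section orderedSimplexIntegral

variable {g : ℕ → ℝ → ℝ}

lemma orderedSimplexIntegral_zero (R : ℝ) : orderedSimplexIntegral g 0 R = 1 := by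
  simp [orderedSimplexIntegral, orderedSimplex, measureReal_def, volume_pi]

variable (hg : ∀ l, ContinuousOn (g l) (Ici 0))
include hg

lemma integrableOn_orderedSimplex_prod (n : ℕ) (R : ℝ) :
    IntegrableOn (fun y => ∏ l : Fin n, g l (y l)) (orderedSimplex n R) := by
  refine ContinuousOn.integrableOn_compact (isCompact_orderedSimplex n R) ?_
  exact continuousOn_finsetProd _ fun l _ => (hg l).comp (continuous_apply l).continuousOn
    fun _ hy => (hy.1 l).1

lemma orderedSimplexIntegral_succ (n : ℕ) {R : ℝ} (hR : 0 ≤ R) :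
    orderedSimplexIntegral g (n + 1) R =
      ∫ s in (0 : ℝ)..R, orderedSimplexIntegral g n s * g n s := by
  rw [orderedSimplexIntegral, setIntegral_orderedSimplex_succ
    (integrableOn_orderedSimplex_prod hg _ R), integral_of_le hR, ← integral_Icc_eq_integral_Ioc]
  simp only [Fin.prod_univ_castSucc, Fin.snoc_castSucc, Fin.snoc_last, Fin.val_castSucc,
    Fin.val_last, MeasureTheory.integral_mul_const, orderedSimplexIntegral]

lemma continuousOn_orderedSimplexIntegral (n : ℕ) :
    ContinuousOn (orderedSimplexIntegral g n) (Ici 0) := by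
  induction n with
  | zero =>
    simp only [funext orderedSimplexIntegral_zero]
    exact continuousOn_const
  | succ n ih =>
    exact fun R hR => (hasDerivWithinAt_Ici_of_eqOn_integral (ih.mul (hg n))
      (fun _ hx => orderedSimplexIntegral_succ hg n hx) hR).continuousWithinAt

lemma hasDerivWithinAt_orderedSimplexIntegral_succ (n : ℕ) {R : ℝ} (hR : 0 ≤ R) :
    HasDerivWithinAt (orderedSimplexIntegral g (n + 1))
      (orderedSimplexIntegral g n R * g n R) (Ici 0) R :=
  hasDerivWithinAt_Ici_of_eqOn_integral ((continuousOn_orderedSimplexIntegral hg n).mul (hg n))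
    (fun _ hx => orderedSimplexIntegral_succ hg n hx) hR

end orderedSimplexIntegral

theorem stmt13 (ν : ℝ) (hν : 0 < ν) (G : ℕ → ℝ → ℝ)
    (hG1 : ∀ x : ℝ, G 1 x = 0)
    (hGrec : ∀ j, 1 ≤ j → ∀ x : ℝ,
      G (j + 1) x = ∫ y in (0 : ℝ)..x, 1 / (1 + (4 / ν ^ 4) * G j y))
    (m : ℕ) (hm : 1 ≤ m)
    (Gp : ℕ → ℝ → ℝ)
    (hGp0 : ∀ x : ℝ, Gp 0 x = 1)
    (hGpdef : ∀ i, 1 ≤ i → ∀ x : ℝ,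
      Gp i x = ∫ y in {y : Fin i → ℝ |
          (∀ l, 0 ≤ y l ∧ y l ≤ 4 / ν ^ 4 * x) ∧ ∀ l l' : Fin i, l ≤ l' → y l ≤ y l'},
        ∏ l : Fin i, 1 / (1 + (4 / ν ^ 4) * G (m + (l : ℕ)) (ν ^ 4 / 4 * y l)) ^ 2) :
    ∀ i, 1 ≤ i → ∀ x : ℝ, 0 ≤ x →
      HasDerivWithinAt (Gp i)
        ((4 / ν ^ 4) * Gp (i - 1) x / (1 + (4 / ν ^ 4) * G (m + i - 1) x) ^ 2)
        (Set.Ici 0) x := by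
  set c : ℝ := 4 / ν ^ 4
  have hc : 0 < c := by positivity
  have hkc : ∀ x, ν ^ 4 / 4 * (c * x) = x := fun x => by simp only [c]; field_simp
  have hG := continuousOn_and_nonneg_of_eq_integral_inv hc.le hG1 hGrec
  set g : ℕ → ℝ → ℝ := fun l t => 1 / (1 + c * G (m + l) (ν ^ 4 / 4 * t)) ^ 2
  have hg : ∀ l, ContinuousOn (g l) (Ici 0) := fun l =>
    have ⟨hcont, hnonneg⟩ := hG (m + l) (by omega)
    continuousOn_one_div_one_add_mul_comp_sq hc.le (by positivity) hcont hnonneg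
  have hGp : ∀ i, Gp i = fun x => orderedSimplexIntegral g i (c * x) := by
    rintro (_ | i) <;> funext x
    · rw [hGp0, orderedSimplexIntegral_zero]
    · exact hGpdef (i + 1) i.succ_pos x
  rintro (_ | n) hn x hx
  · omega
  have hderiv := (hasDerivWithinAt_orderedSimplexIntegral_succ hg n (mul_nonneg hc.le hx)).comp x
    ((hasDerivAt_id x).const_mul c).hasDerivWithinAt fun y (hy : y ∈ Ici 0) => mul_nonneg hc.le hy
  rw [hGp]
  refine hderiv.congr_deriv ?_
  rw [show m + (n + 1) - 1 = m + n by omega, Nat.add_sub_cancel, hGp n]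
  simp only [g, hkc]
  ring
end
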